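/- arXiv:1405.5971 — 2 statements merged into one kernel-verified Lean document; each statement's English description precedes it below -/
import Mathlib

section
/- Let X be a second countable Hausdorff topological space and let Γ be a second countable, locally compact, Hausdorff, abelian topological group that is not compact, acting continuously on X. Then (X, Γ) is weak mixing if and only if (X, Γ) is thick strong mixing. -/
open Pointwise

/-- A subset `N` of a group `G` is thick if for every finite subset `F ⊆ G`,
`N ∩ ⋂_{γ ∈ F} γN ≠ ∅`. -/
def IsThick {G : Type*} [Group G] (N : Set G) : Prop :=
  ∀ F : Finset G, (N ∩ ⋂ γ ∈ F, γ • N).Nonempty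

/-- `N(A, B) = {γ ∈ G : γA ∩ B ≠ ∅}`. -/
def NSet (G : Type*) {X : Type*} [Group G] [MulAction G X] (A B : Set X) : Set G :=
  {γ : G | ((γ • A) ∩ B).Nonempty}

/-- The system `(X, G)` is `k`-transitive: for all nonempty open sets
`U₁, …, U_k, V₁, …, V_k ⊆ X` there is `γ ∈ G` with `γUᵢ ∩ Vᵢ ≠ ∅` for all `i`. -/
def IsKTrans (G : Type*) (X : Type*) [Group G] [TopologicalSpace X] [MulAction G X]
    (k : ℕ) : Prop :=
  ∀ U V : Fin k → Set X, (∀ i, IsOpen (U i)) → (∀ i, (U i).Nonempty) →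
    (∀ i, IsOpen (V i)) → (∀ i, (V i).Nonempty) →
    ∃ γ : G, ∀ i, ((γ • U i) ∩ V i).Nonempty

/-- The system `(X, G)` is thick strong mixing: there is a thick `N ⊆ G` such that for every
pair of nonempty open `U, V ⊆ X` there is a compact `F ⊆ N` with `γU ∩ V ≠ ∅` for all
`γ ∈ N \ F`. -/
def ThickStrongMixing (G : Type*) (X : Type*) [Group G] [TopologicalSpace G]
    [TopologicalSpace X] [MulAction G X] : Prop :=
  ∃ N : Set G, IsThick N ∧
    ∀ U V : Set X, IsOpen U → U.Nonempty → IsOpen V → V.Nonempty →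
      ∃ F : Set G, IsCompact F ∧ F ⊆ N ∧ ∀ γ ∈ N \ F, ((γ • U) ∩ V).Nonempty

/-- The system `(X, G)` is weak mixing: for all nonempty open `U₁, U₂, V₁, V₂ ⊆ X`
there is `γ ∈ G` with `γU₁ ∩ V₁ ≠ ∅` and `γU₂ ∩ V₂ ≠ ∅`. -/
def WeakMixing (G : Type*) (X : Type*) [Group G] [TopologicalSpace X] [MulAction G X] :
    Prop :=
  ∀ U₁ U₂ V₁ V₂ : Set X, IsOpen U₁ → U₁.Nonempty → IsOpen U₂ → U₂.Nonempty →
    IsOpen V₁ → V₁.Nonempty → IsOpen V₂ → V₂.Nonempty →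
    ∃ γ : G, ((γ • U₁) ∩ V₁).Nonempty ∧ ((γ • U₂) ∩ V₂).Nonempty

/-!
Weak mixing of an abelian action makes the sets `N(U, V)` of nonempty open `U, V` a directed
family (Furstenberg's intersection lemma: `N(A, B) ⊆ N(U₁, V₁) ∩ N(U₂, V₂)` for
`A = gU₁ ∩ U₂`, `B = gV₁ ∩ V₂`), so they generate a proper filter, countably generated when `X`
is second countable. By compactness and continuity of the action, each member of this filter
contains right translates `Kx` of a given compact `K` for `x` ranging over a member. A diagonal
choice along a compact exhaustion `Kₙ` and an antitone basis `Sₙ` then gives the thick set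
`⋃ₙ Kₙxₙ`. Conversely, in a noncompact group a thick set `N` never lies in a compact `C`
(otherwise `CC⁻¹` would be the whole group), so two compact exceptional sets cannot cover `N`.
-/

open Filter Set

section Thick

variable {G : Type*} [Group G]

theorem isThick_of_forall_finite_exists_mul_singleton_subset {N : Set G}
    (h : ∀ F : Set G, F.Finite → ∃ z, F * {z} ⊆ N) : IsThick N := by
  intro F
  obtain ⟨z, hz⟩ := h (insert 1 (F : Set G)⁻¹) ((F.finite_toSet.inv).insert 1)
  have hmem : ∀ γ ∈ insert 1 (F : Set G)⁻¹, γ * z ∈ N := fun γ hγ =>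
    hz (mul_mem_mul hγ (mem_singleton z))
  refine ⟨z, by simpa using hmem 1 (mem_insert 1 _), mem_iInter₂.2 fun γ hγ => ?_⟩
  rw [mem_smul_set_iff_inv_smul_mem, smul_eq_mul]
  exact hmem γ⁻¹ (mem_insert_of_mem 1 (inv_mem_inv.2 hγ))

variable [TopologicalSpace G]

theorem IsThick.not_subset_of_isCompact [IsTopologicalGroup G] [NoncompactSpace G] {N C : Set G}
    (hN : IsThick N) (hC : IsCompact C) : ¬ N ⊆ C := by
  intro hNC
  obtain ⟨γ, hγ⟩ := ne_univ_iff_exists_notMem _ |>.1 (hC.mul hC.inv).ne_univ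
  obtain ⟨z, hzN, hz⟩ := hN {γ⁻¹}
  have hγz : γ * z ∈ N := by
    simpa [mem_smul_set_iff_inv_smul_mem] using hz
  exact hγ ⟨γ * z, hNC hγz, z⁻¹, inv_mem_inv.2 (hNC hzN), mul_inv_cancel_right γ z⟩

theorem Filter.exists_isThick_forall_mem_exists_isCompact_diff_subset [ContinuousMul G]
    [WeaklyLocallyCompactSpace G] [SigmaCompactSpace G] (F : Filter G) [F.IsCountablyGenerated]
    [F.NeBot] (hF : ∀ K : Set G, IsCompact K → ∀ S ∈ F, ∀ᶠ x in F, K * {x} ⊆ S) :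
    ∃ N : Set G, IsThick N ∧ ∀ S ∈ F, ∃ C : Set G, IsCompact C ∧ C ⊆ N ∧ N \ C ⊆ S := by
  obtain ⟨S, hS⟩ := F.exists_antitone_basis
  let K := CompactExhaustion.choice G
  choose x hx using fun n => (hF (K n) (K.isCompact n) (S n) (hS.mem n)).exists
  refine ⟨⋃ n, K n * {x n}, ?_, fun T hT => ?_⟩
  · refine isThick_of_forall_finite_exists_mul_singleton_subset fun F hF => ?_
    obtain ⟨n, hn⟩ := K.exists_superset_of_isCompact hF.isCompact
    exact ⟨x n, (mul_subset_mul_right hn).trans (subset_iUnion (fun n => K n * {x n}) n)⟩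
  obtain ⟨i, hi⟩ := hS.mem_iff.1 hT
  refine ⟨⋃ m ∈ Finset.range i, K m * {x m},
    (Finset.range i).isCompact_biUnion fun m _ => (K.isCompact m).mul isCompact_singleton,
    iUnion₂_subset fun m _ => subset_iUnion (fun n => K n * {x n}) m, ?_⟩
  rintro γ ⟨hγN, hγC⟩
  obtain ⟨n, hn⟩ := mem_iUnion.1 hγN
  have hin : i ≤ n := not_lt.1 fun hni => hγC (mem_biUnion (Finset.mem_range.2 hni) hn)
  exact hi (hS.antitone hin (hx n hn))

end Thick

section NSet

variable {G X : Type*}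

theorem nSet_mono [Group G] [MulAction G X] {U U' V V' : Set X} (hU : U ⊆ U') (hV : V ⊆ V') :
    NSet G U V ⊆ NSet G U' V' := fun _ hγ =>
  hγ.mono (inter_subset_inter (smul_set_mono hU) hV)

theorem mul_mem_nSet [Group G] [MulAction G X] {U O V : Set X} {x k : G} (hx : x ∈ NSet G U O)
    (hk : k • O ⊆ V) : k * x ∈ NSet G U V := by
  obtain ⟨y, hyU, hyO⟩ := hx
  refine ⟨k • y, ?_, hk (smul_mem_smul_set hyO)⟩
  rw [mul_smul]
  exact smul_mem_smul_set hyU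

theorem nSet_smul_smul [CommGroup G] [MulAction G X] (g : G) (U V : Set X) :
    NSet G (g • U) (g • V) = NSet G U V := by
  ext γ
  simp only [NSet, mem_ofPred_eq, smul_comm γ g U, ← smul_set_inter, smul_set_nonempty]

end NSet

section NSetFilter

variable (G X : Type*) [Group G] [TopologicalSpace X] [MulAction G X]

def nSetFilter : Filter G :=
  ⨅ p ∈ {U : Set X | IsOpen U ∧ U.Nonempty} ×ˢ {U : Set X | IsOpen U ∧ U.Nonempty},
    𝓟 (NSet G p.1 p.2)

variable {G X}

theorem nSet_mem_nSetFilter {U V : Set X} (hU : IsOpen U) (hU' : U.Nonempty) (hV : IsOpen V)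
    (hV' : V.Nonempty) : NSet G U V ∈ nSetFilter G X :=
  iInf₂_le (f := fun p _ => 𝓟 (NSet G p.1 p.2)) (U, V) ⟨⟨hU, hU'⟩, hV, hV'⟩
    (mem_principal_self _)

instance [SecondCountableTopology X] : (nSetFilter G X).IsCountablyGenerated := by
  obtain ⟨b, hbc, hb, hbasis⟩ := TopologicalSpace.exists_countable_basis X
  have hgood : ∀ U ∈ b, IsOpen U ∧ U.Nonempty := fun U hU =>
    ⟨hbasis.isOpen hU, nonempty_iff_ne_empty.2 fun h => hb (h ▸ hU)⟩
  have hsmall : ∀ {U : Set X}, IsOpen U → U.Nonempty → ∃ u ∈ b, u ⊆ U := by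
    rintro U hU ⟨x, hx⟩
    obtain ⟨u, hub, -, huU⟩ := hbasis.exists_subset_of_mem_open hx hU
    exact ⟨u, hub, huU⟩
  let c := b ×ˢ b
  have : nSetFilter G X = ⨅ p ∈ c, 𝓟 (NSet G p.1 p.2) := by
    refine le_antisymm (biInf_mono fun p hp => ⟨hgood _ hp.1, hgood _ hp.2⟩)
      (le_iInf₂ fun p hp => ?_)
    obtain ⟨u, hub, hu⟩ := hsmall hp.1.1 hp.1.2
    obtain ⟨v, hvb, hv⟩ := hsmall hp.2.1 hp.2.2
    exact iInf₂_le_of_le (u, v) ⟨hub, hvb⟩ (principal_mono.2 (nSet_mono hu hv))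
  rw [this, iInf_subtype']
  have : Countable c := (hbc.prod hbc).to_subtype
  infer_instance

end NSetFilter

theorem IsCompact.exists_finite_smul_subset {G X : Type*} [Group G] [TopologicalSpace G]
    [TopologicalSpace X] [MulAction G X] [ContinuousSMul G X] {K : Set G} (hK : IsCompact K)
    {V : Set X} (hV : IsOpen V) (hV' : V.Nonempty) :
    ∃ t : Set (Set X), t.Finite ∧ (∀ O ∈ t, IsOpen O ∧ O.Nonempty) ∧
      ∀ k ∈ K, ∃ O ∈ t, k • O ⊆ V := by
  obtain ⟨v, hv⟩ := hV'
  have hloc : ∀ k₀ : G, ∃ (W : Set G) (O : Set X), IsOpen W ∧ k₀ ∈ W ∧ IsOpen O ∧ O.Nonempty ∧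
      ∀ k ∈ W, k • O ⊆ V := by
    intro k₀
    have hk₀ : (k₀, k₀⁻¹ • v) ∈ (fun p : G × X => p.1 • p.2) ⁻¹' V := by simpa using hv
    obtain ⟨W, O, hW, hk₀W, hO, hvO, hWO⟩ :=
      mem_nhds_prod_iff'.1 ((hV.preimage continuous_smul).mem_nhds hk₀)
    exact ⟨W, O, hW, hk₀W, hO, ⟨_, hvO⟩, fun k hk => smul_set_subset_iff.2 fun y hy =>
      hWO (mk_mem_prod hk hy)⟩
  choose W O hW hk₀W hO hO' hWO using hloc
  obtain ⟨s, -, hs⟩ := hK.elim_nhds_subcover W fun k _ => (hW k).mem_nhds (hk₀W k)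
  refine ⟨O '' s, s.finite_toSet.image O, forall_mem_image.2 fun k _ => ⟨hO k, hO' k⟩,
    fun k hk => ?_⟩
  obtain ⟨k₀, hk₀s, hkW⟩ := mem_iUnion₂.1 (hs hk)
  exact ⟨O k₀, mem_image_of_mem O hk₀s, hWO k₀ k hkW⟩

section Mixing

variable {G X : Type*} [TopologicalSpace X]

theorem eventually_mul_singleton_subset_of_mem_nSetFilter [Group G] [MulAction G X]
    [TopologicalSpace G] [ContinuousSMul G X] {K : Set G} (hK : IsCompact K) {S : Set G}
    (hS : S ∈ nSetFilter G X) : ∀ᶠ x in nSetFilter G X, K * {x} ⊆ S := by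
  -- The sets `S` with `∀ᶠ x, K * {x} ⊆ S` form the filter `bind`, so it is enough to check
  -- the generators `NSet G U V`.
  suffices (nSetFilter G X).bind (fun x => 𝓟 (K * {x})) ≤ nSetFilter G X from this hS
  refine le_iInf₂ fun p hp => le_principal_iff.2 ?_
  obtain ⟨t, ht, htO, hKt⟩ := hK.exists_finite_smul_subset hp.2.1 hp.2.2
  have hmem : ⋂ O ∈ t, NSet G p.1 O ∈ nSetFilter G X :=
    (biInter_mem ht).2 fun O hO => nSet_mem_nSetFilter hp.1.1 hp.1.2 (htO O hO).1 (htO O hO).2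
  refine mem_bind'.2 (mem_of_superset hmem fun x hx => ?_)
  rw [mem_ofPred_eq, mem_principal, mul_singleton, image_subset_iff]
  intro k hk
  obtain ⟨O, hO, hkO⟩ := hKt k hk
  exact mul_mem_nSet (mem_iInter₂.1 hx O hO) hkO

theorem WeakMixing.exists_nSet_subset_inter [CommGroup G] [MulAction G X]
    [ContinuousConstSMul G X] (h : WeakMixing G X) {U₁ V₁ U₂ V₂ : Set X}
    (hU₁ : IsOpen U₁) (hU₁' : U₁.Nonempty) (hV₁ : IsOpen V₁) (hV₁' : V₁.Nonempty)
    (hU₂ : IsOpen U₂) (hU₂' : U₂.Nonempty) (hV₂ : IsOpen V₂) (hV₂' : V₂.Nonempty) :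
    ∃ A B : Set X, IsOpen A ∧ A.Nonempty ∧ IsOpen B ∧ B.Nonempty ∧
      NSet G A B ⊆ NSet G U₁ V₁ ∩ NSet G U₂ V₂ := by
  obtain ⟨g, hgU, hgV⟩ := h U₁ V₁ U₂ V₂ hU₁ hU₁' hV₁ hV₁' hU₂ hU₂' hV₂ hV₂'
  refine ⟨g • U₁ ∩ U₂, g • V₁ ∩ V₂, (hU₁.smul g).inter hU₂, hgU, (hV₁.smul g).inter hV₂, hgV,
    fun γ hγ => ⟨?_, nSet_mono inter_subset_right inter_subset_right hγ⟩⟩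
  rw [← nSet_smul_smul g]
  exact nSet_mono inter_subset_left inter_subset_left hγ

theorem WeakMixing.nSetFilter_neBot [CommGroup G] [MulAction G X] [ContinuousConstSMul G X]
    (h : WeakMixing G X) : (nSetFilter G X).NeBot := by
  rw [nSetFilter, iInf_subtype']
  refine iInf_neBot_of_directed ?_ fun p => principal_neBot_iff.2 ?_
  · rintro ⟨⟨U₁, V₁⟩, ⟨hU₁, hU₁'⟩, hV₁, hV₁'⟩ ⟨⟨U₂, V₂⟩, ⟨hU₂, hU₂'⟩, hV₂, hV₂'⟩
    obtain ⟨A, B, hA, hA', hB, hB', hAB⟩ :=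
      h.exists_nSet_subset_inter hU₁ hU₁' hV₁ hV₁' hU₂ hU₂' hV₂ hV₂'
    exact ⟨⟨(A, B), ⟨hA, hA'⟩, hB, hB'⟩, principal_mono.2 (hAB.trans inter_subset_left),
      principal_mono.2 (hAB.trans inter_subset_right)⟩
  · obtain ⟨⟨U, V⟩, ⟨hU, hU'⟩, hV, hV'⟩ := p
    obtain ⟨γ, hγ, -⟩ := h U U V V hU hU' hU hU' hV hV' hV hV'
    exact ⟨γ, hγ⟩

theorem WeakMixing.thickStrongMixing [CommGroup G] [MulAction G X] [TopologicalSpace G]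
    [ContinuousMul G] [WeaklyLocallyCompactSpace G] [SigmaCompactSpace G]
    [SecondCountableTopology X] [ContinuousSMul G X] (h : WeakMixing G X) :
    ThickStrongMixing G X := by
  have := h.nSetFilter_neBot
  obtain ⟨N, hN, hmix⟩ := (nSetFilter G X).exists_isThick_forall_mem_exists_isCompact_diff_subset
    fun K hK S hS => eventually_mul_singleton_subset_of_mem_nSetFilter hK hS
  exact ⟨N, hN, fun U V hU hU' hV hV' => hmix _ (nSet_mem_nSetFilter hU hU' hV hV')⟩

theorem ThickStrongMixing.weakMixing [Group G] [MulAction G X] [TopologicalSpace G]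
    [IsTopologicalGroup G] [NoncompactSpace G] (h : ThickStrongMixing G X) : WeakMixing G X := by
  rintro U₁ U₂ V₁ V₂ hU₁ hU₁' hU₂ hU₂' hV₁ hV₁' hV₂ hV₂'
  obtain ⟨N, hN, hmix⟩ := h
  obtain ⟨C₁, hC₁, -, h₁⟩ := hmix U₁ V₁ hU₁ hU₁' hV₁ hV₁'
  obtain ⟨C₂, hC₂, -, h₂⟩ := hmix U₂ V₂ hU₂ hU₂' hV₂ hV₂'
  obtain ⟨γ, hγN, hγC⟩ := not_subset.1 (hN.not_subset_of_isCompact (hC₁.union hC₂))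
  exact ⟨γ, h₁ γ ⟨hγN, fun h => hγC (Or.inl h)⟩, h₂ γ ⟨hγN, fun h => hγC (Or.inr h)⟩⟩

end Mixing

theorem weakMixing_iff_thickStrongMixing_abelian_general {X Γ : Type*} [TopologicalSpace X]
    [SecondCountableTopology X] [CommGroup Γ] [TopologicalSpace Γ]
    [IsTopologicalGroup Γ] [SecondCountableTopology Γ] [LocallyCompactSpace Γ]
    (hnc : ¬ CompactSpace Γ) [MulAction Γ X] [ContinuousSMul Γ X] :
    WeakMixing Γ X ↔ ThickStrongMixing Γ X :=
  have := not_compactSpace_iff.1 hnc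
  ⟨WeakMixing.thickStrongMixing, ThickStrongMixing.weakMixing⟩

/-- For `X` a second countable Hausdorff space and `Γ` a second countable, locally compact,
Hausdorff, abelian topological group that is not compact, acting continuously on `X`:
`(X, Γ)` is weak mixing if and only if it is thick strong mixing. -/
theorem weakMixing_iff_thickStrongMixing_abelian {X Γ : Type*} [TopologicalSpace X]
    [T2Space X] [SecondCountableTopology X] [CommGroup Γ] [TopologicalSpace Γ]
    [IsTopologicalGroup Γ] [T2Space Γ] [SecondCountableTopology Γ] [LocallyCompactSpace Γ]
    (hnc : ¬ CompactSpace Γ) [MulAction Γ X] [ContinuousSMul Γ X] :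
    WeakMixing Γ X ↔ ThickStrongMixing Γ X :=
  weakMixing_iff_thickStrongMixing_abelian_general hnc
end

section
/- The action of SL(2, ℤ) on the torus 𝕋² = ℝ²/ℤ² induced by matrix multiplication on ℝ² is k-transitive for every k ∈ ℕ: for all nonempty open sets U₁, …, U_k, V₁, …, V_k ⊆ 𝕋² there exists γ ∈ SL(2, ℤ) with γUᵢ ∩ Vᵢ ≠ ∅ for all 1 ≤ i ≤ k. -/
open Pointwise

/-- The torus `𝕋² = ℝ²/ℤ²`, realized as the quotient of `Fin 2 → ℝ` by the integer
lattice (the subgroup of vectors with all coordinates in `ℤ·1`), with the quotient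
topology. -/
abbrev Torus2 : Type :=
  (Fin 2 → ℝ) ⧸ (AddSubgroup.pi (Set.univ : Set (Fin 2)) fun _ => AddSubgroup.zmultiples (1 : ℝ))

/-- The quotient map `ℝ² → 𝕋²`. -/
def torusMk : (Fin 2 → ℝ) → Torus2 := QuotientAddGroup.mk

/-- The linear action of `γ ∈ SL(2, ℤ)` on `ℝ²` by matrix multiplication. -/
def sl2Vec (γ : Matrix.SpecialLinearGroup (Fin 2) ℤ) (v : Fin 2 → ℝ) : Fin 2 → ℝ :=
  ((γ : Matrix (Fin 2) (Fin 2) ℤ).map (Int.cast : ℤ → ℝ)).mulVec v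

/-- `slHits γ U V` says that `γU ∩ V ≠ ∅` for the induced action of `γ ∈ SL(2, ℤ)` on the
torus: since the quotient map is surjective, this holds iff some `v ∈ ℝ²` has `[v] ∈ U`
and `[γv] ∈ V`. -/
def slHits (γ : Matrix.SpecialLinearGroup (Fin 2) ℤ) (U V : Set Torus2) : Prop :=
  ∃ v : Fin 2 → ℝ, torusMk v ∈ U ∧ torusMk (sl2Vec γ v) ∈ V

/-! The matrix `A = [[2, 1], [1, 1]]` has the expanding eigenvector `w = (φ, 1)` with eigenvalue
`φ² > 1`, and since `φ` is irrational the line `ℝw` winds densely around the torus. By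
compactness of the torus, every translate of a long enough segment `[-L, L]w` meets a given
nonempty open set `V`. A nonempty open set `U` contains a short segment `u + [-δ, δ]w`, which
`Aⁿ` stretches to `Aⁿu + [-φ²ⁿδ, φ²ⁿδ]w`; hence `AⁿU` meets `V` for all large `n`, and one `n`
serves finitely many pairs `(Uᵢ, Vᵢ)` at once. -/

open Filter Topology

lemma continuous_torusMk : Continuous torusMk := continuous_quot_mk

lemma torusMk_add (a b : Fin 2 → ℝ) : torusMk (a + b) = torusMk a + torusMk b := rfl

lemma torusMk_add_intCast (v : Fin 2 → ℝ) (z : Fin 2 → ℤ) :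
    torusMk (v + fun i => (z i : ℝ)) = torusMk v := by
  refine (QuotientAddGroup.eq.2 fun i _ => ⟨z i, ?_⟩).symm
  simp

instance : CompactSpace Torus2 := by
  have hunit : torusMk '' Set.univ.pi (fun _ => Set.Icc 0 1) = Set.univ := by
    refine Set.eq_univ_of_forall fun x => ?_
    obtain ⟨v, rfl⟩ := QuotientAddGroup.mk_surjective x
    refine ⟨fun i => Int.fract (v i), fun i _ => ⟨Int.fract_nonneg _, (Int.fract_lt_one _).le⟩, ?_⟩
    rw [← torusMk_add_intCast _ fun i => ⌊v i⌋]
    exact congrArg torusMk (funext fun i => Int.fract_add_floor (v i))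
  refine ⟨?_⟩
  rw [← hunit]
  exact (isCompact_univ_pi fun _ => isCompact_Icc).image continuous_torusMk

lemma denseRange_torusMk_smul {α : ℝ} (hα : Irrational α) :
    DenseRange fun t : ℝ => torusMk (t • ![α, 1]) := by
  have hclosure : Dense (AddSubgroup.closure {α, 1} : Set ℝ) :=
    dense_addSubgroupClosure_pair_iff.2 (by simpa using hα)
  rw [DenseRange, ← QuotientAddGroup.dense_preimage_mk, Metric.dense_iff]
  intro v r hr
  obtain ⟨_, hy, hmem⟩ := Metric.dense_iff.1 hclosure (v 0 - α * v 1) r hr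
  obtain ⟨m, n, rfl⟩ := AddSubgroup.mem_closure_pair.1 hmem
  -- At time `v 1 + m` the line passes through `(α (v 1 + m) + n, v 1)` modulo `ℤ²`.
  refine ⟨(v 1 + m) • ![α, 1] + fun i => ((![n, -m] : Fin 2 → ℤ) i : ℝ), ?_, v 1 + m,
    (torusMk_add_intCast _ _).symm⟩
  · rw [Metric.mem_ball, dist_pi_lt_iff hr]
    intro i
    fin_cases i
    · rw [Metric.mem_ball, Real.dist_eq] at hy
      rw [Real.dist_eq]
      convert hy using 2
      simp only [Fin.zero_eta, Pi.add_apply, Pi.smul_apply, Matrix.cons_val_zero, smul_eq_mul,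
        zsmul_eq_mul, mul_one]
      ring
    · simpa using hr

theorem exists_abs_le_add_mem_of_denseRange {G : Type*} [AddGroup G] [TopologicalSpace G]
    [ContinuousAdd G] [CompactSpace G] {f : ℝ → G} (hf : DenseRange f) {V : Set G}
    (hV : IsOpen V) (hne : V.Nonempty) : ∃ L, ∀ x, ∃ t, |t| ≤ L ∧ x + f t ∈ V := by
  obtain ⟨y, hy⟩ := hne
  have hcover : (Set.univ : Set G) ⊆ ⋃ t, (· + f t) ⁻¹' V := fun x _ =>
    Set.mem_iUnion.2 (hf.exists_mem_open (hV.preimage (continuous_const_add x))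
      ⟨-x + y, by simpa using hy⟩)
  obtain ⟨T, hT⟩ := isCompact_univ.elim_finite_subcover _
    (fun t => hV.preimage (continuous_add_const (f t))) hcover
  refine ⟨∑ t ∈ T, |t|, fun x => ?_⟩
  obtain ⟨t, ht, hx⟩ := Set.mem_iUnion₂.1 (hT (Set.mem_univ x))
  exact ⟨t, Finset.single_le_sum (fun t _ => abs_nonneg t) ht, hx⟩

lemma sl2Vec_mul (γ δ : Matrix.SpecialLinearGroup (Fin 2) ℤ) (v : Fin 2 → ℝ) :
    sl2Vec (γ * δ) v = sl2Vec γ (sl2Vec δ v) := by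
  simp only [sl2Vec, Matrix.SpecialLinearGroup.coe_mul, Matrix.mulVec_mulVec]
  exact congrArg (Matrix.mulVec · v) (Matrix.map_mul (f := Int.castRingHom ℝ))

lemma sl2Vec_add (γ : Matrix.SpecialLinearGroup (Fin 2) ℤ) (u w : Fin 2 → ℝ) :
    sl2Vec γ (u + w) = sl2Vec γ u + sl2Vec γ w :=
  Matrix.mulVec_add _ u w

lemma sl2Vec_smul (γ : Matrix.SpecialLinearGroup (Fin 2) ℤ) (s : ℝ) (w : Fin 2 → ℝ) :
    sl2Vec γ (s • w) = s • sl2Vec γ w :=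
  Matrix.mulVec_smul _ s w

lemma sl2Vec_pow_of_eq_smul {γ : Matrix.SpecialLinearGroup (Fin 2) ℤ} {w : Fin 2 → ℝ} {c : ℝ}
    (hw : sl2Vec γ w = c • w) (n : ℕ) : sl2Vec (γ ^ n) w = c ^ n • w := by
  induction n with
  | zero => simp [sl2Vec]
  | succ n ih => rw [pow_succ, sl2Vec_mul, hw, sl2Vec_smul, ih, smul_smul, pow_succ']

theorem eventually_slHits_pow {γ : Matrix.SpecialLinearGroup (Fin 2) ℤ} {w : Fin 2 → ℝ} {c : ℝ}
    (hw : sl2Vec γ w = c • w) (hc : 1 < c) (hdense : DenseRange fun t : ℝ => torusMk (t • w))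
    {U V : Set Torus2} (hU : IsOpen U) (hUne : U.Nonempty) (hV : IsOpen V) (hVne : V.Nonempty) :
    ∀ᶠ n in atTop, slHits (γ ^ n) U V := by
  obtain ⟨u, hu⟩ := QuotientAddGroup.mk_surjective.exists.1 hUne
  have hsegment : ∀ᶠ s in 𝓝 (0 : ℝ), torusMk (u + s • w) ∈ U := by
    have hcont : Continuous fun s : ℝ => torusMk (u + s • w) :=
      continuous_torusMk.comp (by fun_prop)
    exact hcont.continuousAt.preimage_mem_nhds (by rw [zero_smul, add_zero]; exact hU.mem_nhds hu)
  obtain ⟨L, hL⟩ := exists_abs_le_add_mem_of_denseRange hdense hV hVne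
  choose t ht htV using fun n : ℕ => hL (torusMk (sl2Vec (γ ^ n) u))
  have hshrink : Tendsto (fun n => t n / c ^ n) atTop (𝓝 0) :=
    tendsto_bdd_div_atTop_nhds_zero (b := -L) (B := L)
      (.of_forall fun n => (abs_le.1 (ht n)).1) (.of_forall fun n => (abs_le.1 (ht n)).2)
      (tendsto_pow_atTop_atTop_of_one_lt hc)
  filter_upwards [hshrink.eventually hsegment] with n hn
  refine ⟨u + (t n / c ^ n) • w, hn, ?_⟩
  rw [sl2Vec_add, sl2Vec_smul, sl2Vec_pow_of_eq_smul hw, smul_smul,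
    div_mul_cancel₀ _ (pow_pos (zero_lt_one.trans hc) n).ne', torusMk_add]
  exact htV n

open scoped goldenRatio

def catMap : Matrix.SpecialLinearGroup (Fin 2) ℤ :=
  ⟨!![2, 1; 1, 1], by simp [Matrix.det_fin_two_of]⟩

lemma sl2Vec_catMap_goldenRatio : sl2Vec catMap ![φ, 1] = φ ^ 2 • ![φ, 1] := by
  ext i
  fin_cases i <;> simp [sl2Vec, catMap, Matrix.mulVec, dotProduct, Fin.sum_univ_two]
  linear_combination -Real.goldenRatio_sq

/-- The action of `SL(2, ℤ)` on the torus `𝕋² = ℝ²/ℤ²` is `k`-transitive for every `k`: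
for all nonempty open `U₁, …, U_k, V₁, …, V_k ⊆ 𝕋²` there is `γ ∈ SL(2, ℤ)` with
`γUᵢ ∩ Vᵢ ≠ ∅` for all `i`. -/
theorem sl2_torus_kTransitive :
    ∀ (k : ℕ) (U V : Fin k → Set Torus2),
      (∀ i, IsOpen (U i)) → (∀ i, (U i).Nonempty) →
      (∀ i, IsOpen (V i)) → (∀ i, (V i).Nonempty) →
      ∃ γ : Matrix.SpecialLinearGroup (Fin 2) ℤ, ∀ i, slHits γ (U i) (V i) := by
  intro k U V hU hUne hV hVne
  have hφ : 1 < φ ^ 2 := one_lt_pow₀ Real.one_lt_goldenRatio two_ne_zero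
  have hdense := denseRange_torusMk_smul Real.goldenRatio_irrational
  obtain ⟨n, hn⟩ := (eventually_all.2 fun i => eventually_slHits_pow sl2Vec_catMap_goldenRatio hφ
    hdense (hU i) (hUne i) (hV i) (hVne i)).exists
  exact ⟨catMap ^ n, hn⟩
end
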